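/- Let p be a prime and K a field of characteristic 0 that is complete with respect to a nontrivial multiplicative ultrametric norm ‖·‖, algebraically closed, and satisfies ‖(p : K)‖ < 1. Set q := ‖(p : K)‖^{1/(p−1)} and, for n ≥ 1, let B_n := {X ∈ M_n(K) : every root λ ∈ K of the characteristic polynomial of X satisfies ‖λ‖ < q}. Then: (i) for every X ∈ B_n the series e₁(X) := Σ_{v≥1} (1/v!)·X^v converges in M_n(K) and e₁(X) ∈ B_n; (ii) for every X ∈ B_n the series l₁(X) := Σ_{v≥1} ((−1)^{v−1}/v)·X^v converges in M_n(K) and l₁(X) ∈ B_n; (iii) l₁(e₁(X)) = X and e₁(l₁(X)) = X for all X ∈ B_n, so e₁ and l₁ are mutually inverse bijections of B_n onto itself. -/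

import Mathlib

/-!
Write `q = ‖p‖ ^ (1 / (p - 1))`. Since `v_p(v!)` and `v_p(v)` are at most `(v - 1) / (p - 1)`,
the coefficients `a_v` of both series satisfy `‖a_v‖ q ^ v ≤ q`. If every eigenvalue of `X` has
norm at most `r < q`, Cayley–Hamilton and the ultrametric bound `‖c_i‖ ≤ r ^ (n - i)` on the
coefficients of the characteristic polynomial give `‖X ^ v‖ ≤ C r ^ v`; on the closed set of such
`X` both series converge uniformly. The partial sums are polynomials in `X` without constant term,
so by spectral mapping their eigenvalues stay in the disc of radius `r`, and since the power bound
is a closed condition so do those of the limit.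

For the inverse property, the truncations satisfy `L_N ∘ E_N ≡ X` and `E_N ∘ L_N ≡ X` modulo
`X ^ (N + 1)` (compare derivatives), and the Gauss norm at radius `q` of the composite stays
at most `q`. Hence `L_N (E_N X) → X`, while uniform convergence and continuity of `L` give
`L_N (E_N X) → L (E X)`.
-/

open Filter

/-- `B_n`: matrices over `K` all of whose eigenvalues `λ` satisfy `‖λ‖ < q`,
where `q = ‖p‖^{1/(p−1)}`. -/
def spectralBall (p : ℕ) (K : Type*) [NontriviallyNormedField K] (n : ℕ) :
    Set (Matrix (Fin n) (Fin n) K) :=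
  {X | ∀ lam : K, (Matrix.charpoly X).IsRoot lam →
    ‖lam‖ < ‖(p : K)‖ ^ ((1 : ℝ) / ((p : ℝ) - 1))}

/-- Partial sums of the exponential series `∑_{v ≥ 1} (1/v!)·X^v`. -/
noncomputable def matExpSums (K : Type*) [NontriviallyNormedField K] {n : ℕ}
    (X : Matrix (Fin n) (Fin n) K) (N : ℕ) : Matrix (Fin n) (Fin n) K :=
  ∑ v ∈ Finset.Icc 1 N, ((v.factorial : K))⁻¹ • X ^ v

/-- Partial sums of the logarithmic series `∑_{v ≥ 1} ((−1)^{v−1}/v)·X^v`. -/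
noncomputable def matLogSums (K : Type*) [NontriviallyNormedField K] {n : ℕ}
    (X : Matrix (Fin n) (Fin n) K) (N : ℕ) : Matrix (Fin n) (Fin n) K :=
  ∑ v ∈ Finset.Icc 1 N, (((-1 : K) ^ (v - 1)) / (v : K)) • X ^ v

open Topology Polynomial

theorem Nat.sub_one_mul_padicValNat_le (p v : ℕ) [Fact p.Prime] :
    (p - 1) * padicValNat p v ≤ v - 1 := by
  rcases Nat.eq_zero_or_pos v with rfl | hv
  · simp
  have hp : 1 ≤ p := (Fact.out : p.Prime).one_lt.le
  generalize he : padicValNat p v = e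
  have hdvd : p ^ e ≤ v := Nat.le_of_dvd hv (he ▸ pow_padicValNat_dvd)
  have hbern : (1 + e * ((p : ℤ) - 1) : ℤ) ≤ (p : ℤ) ^ e := one_add_mul_sub_le_pow (by omega) _
  zify [hp, hv] at hdvd ⊢
  nlinarith

theorem Nat.sub_one_mul_padicValNat_factorial_le (p v : ℕ) [Fact p.Prime] :
    (p - 1) * padicValNat p v.factorial ≤ v - 1 := by
  rcases Nat.eq_zero_or_pos v with rfl | hv
  · simp
  have := sub_one_mul_padicValNat_factorial_lt_of_ne_zero p hv.ne'
  omega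

theorem le_of_forall_pow_le_mul_pow {a b C : ℝ} (hb : 0 ≤ b) (h : ∀ v : ℕ, a ^ v ≤ C * b ^ v) :
    a ≤ b := by
  by_contra! hba
  have ha : 0 < a := hb.trans_lt hba
  have hlim : Tendsto (fun v : ℕ => C * (b / a) ^ v) atTop (𝓝 0) := by
    simpa using (tendsto_pow_atTop_nhds_zero_of_lt_one (div_nonneg hb ha.le)
      ((div_lt_one ha).2 hba)).const_mul C
  obtain ⟨v, hv⟩ := (hlim.eventually (gt_mem_nhds one_pos)).exists
  have : 1 ≤ C * (b / a) ^ v := by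
    rw [div_pow, mul_div_assoc', le_div_iff₀ (pow_pos ha v), one_mul]
    exact h v
  linarith

theorem Set.Finite.exists_pos_lt_subset_closedBall {E : Type*} [SeminormedAddCommGroup E]
    {s : Set E} (hs : s.Finite) {q : ℝ} (hq : 0 < q) (h : s ⊆ Metric.ball 0 q) :
    ∃ r ∈ Set.Ioo 0 q, s ⊆ Metric.closedBall 0 r := by
  rcases s.eq_empty_or_nonempty with rfl | hne
  · exact ⟨q / 2, ⟨by positivity, by linarith⟩, Set.empty_subset _⟩
  obtain ⟨x, hx, hmax⟩ := s.exists_max_image (‖·‖) hs hne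
  exact ⟨max (q / 2) ‖x‖, ⟨by positivity, max_lt (by linarith) (mem_ball_zero_iff.1 (h hx))⟩,
    fun y hy => mem_closedBall_zero_iff.2 ((hmax y hy).trans (le_max_right _ _))⟩

section IntegerNorms

variable {K : Type*} [NormedField K] {p : ℕ}

theorem norm_natCast_eq_one_of_coprime [IsUltrametricDist K] (hpK : ‖(p : K)‖ < 1) {m : ℕ}
    (h : p.Coprime m) : ‖(m : K)‖ = 1 := by
  refine (IsUltrametricDist.norm_natCast_le_one K m).antisymm (not_lt.1 fun hm => ?_)
  obtain ⟨a, b, hab⟩ := Nat.isCoprime_iff_coprime.2 h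
  have hlt : ‖(a : K) * p + b * m‖ < 1 := by
    refine (IsUltrametricDist.norm_add_le_max _ _).trans_lt (max_lt ?_ ?_) <;> rw [norm_mul]
    · exact mul_lt_one_of_nonneg_of_lt_one_right (IsUltrametricDist.norm_intCast_le_one K a)
        (norm_nonneg _) hpK
    · exact mul_lt_one_of_nonneg_of_lt_one_right (IsUltrametricDist.norm_intCast_le_one K b)
        (norm_nonneg _) hm
  have h1 : (a : K) * p + b * m = 1 := by exact_mod_cast congrArg (Int.cast : ℤ → K) hab
  simp [h1] at hlt

theorem norm_natCast_eq_pow_padicValNat [IsUltrametricDist K] [hp : Fact p.Prime]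
    (hpK : ‖(p : K)‖ < 1) {c : ℕ} (hc : c ≠ 0) : ‖(c : K)‖ = ‖(p : K)‖ ^ padicValNat p c := by
  have hcop := Nat.coprime_ordCompl hp.out hc
  rw [Nat.factorization_def c hp.out] at hcop
  conv_lhs => rw [← Nat.ordProj_mul_ordCompl_eq_self c p, Nat.factorization_def c hp.out]
  rw [Nat.cast_mul, norm_mul, Nat.cast_pow, norm_pow, norm_natCast_eq_one_of_coprime hpK hcop,
    mul_one]

noncomputable def expRadius (p : ℕ) (K : Type*) [NormedField K] : ℝ :=
  ‖(p : K)‖ ^ ((1 : ℝ) / ((p : ℝ) - 1))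

variable [hp : Fact p.Prime]

theorem expRadius_pow_sub_one : expRadius p K ^ (p - 1) = ‖(p : K)‖ := by
  have hp1 : ((p - 1 : ℕ) : ℝ) = (p : ℝ) - 1 := by
    rw [Nat.cast_sub hp.out.one_le, Nat.cast_one]
  rw [expRadius, ← Real.rpow_natCast, ← Real.rpow_mul (norm_nonneg _), hp1,
    one_div_mul_cancel (sub_ne_zero.2 (by exact_mod_cast hp.out.one_lt.ne')), Real.rpow_one]

theorem expRadius_le_one (hpK : ‖(p : K)‖ < 1) : expRadius p K ≤ 1 :=
  Real.rpow_le_one (norm_nonneg _) hpK.le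
    (div_nonneg zero_le_one (sub_nonneg.2 (by exact_mod_cast hp.out.one_le)))

variable [CharZero K]

theorem expRadius_pos : 0 < expRadius p K :=
  Real.rpow_pos_of_pos (norm_pos_iff.2 (Nat.cast_ne_zero.2 hp.out.ne_zero)) _

theorem norm_inv_natCast_mul_expRadius_pow_le [IsUltrametricDist K] (hpK : ‖(p : K)‖ < 1)
    {c v : ℕ} (hc : c ≠ 0) (hv : 1 ≤ v) (h : (p - 1) * padicValNat p c ≤ v - 1) :
    ‖(c : K)⁻¹‖ * expRadius p K ^ v ≤ expRadius p K := by
  have hq := expRadius_pos (p := p) (K := K)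
  have hc' : expRadius p K ^ (v - 1) ≤ ‖(c : K)‖ := by
    rw [norm_natCast_eq_pow_padicValNat hpK hc, ← expRadius_pow_sub_one, ← pow_mul]
    exact pow_le_pow_of_le_one hq.le (expRadius_le_one hpK) h
  rw [norm_inv, inv_mul_le_iff₀ ((pow_pos hq _).trans_le hc'), ← Nat.sub_add_cancel hv, pow_succ]
  exact mul_le_mul_of_nonneg_right hc' hq.le

end IntegerNorms

section Coefficients

noncomputable def expCoeff (K : Type*) [Field K] (v : ℕ) : K := (v.factorial : K)⁻¹

noncomputable def logCoeff (K : Type*) [Field K] (v : ℕ) : K := (-1) ^ (v - 1) / v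

def CoeffsBounded {K : Type*} [NormedField K] (q : ℝ) (a : ℕ → K) : Prop :=
  ∀ v, 1 ≤ v → ‖a v‖ * q ^ v ≤ q

variable {K : Type*} [NormedField K] [IsUltrametricDist K] [CharZero K] {p : ℕ} [Fact p.Prime]

theorem coeffsBounded_expCoeff (hpK : ‖(p : K)‖ < 1) :
    CoeffsBounded (expRadius p K) (expCoeff K) := fun v hv =>
  norm_inv_natCast_mul_expRadius_pow_le hpK v.factorial_ne_zero hv
    (Nat.sub_one_mul_padicValNat_factorial_le p v)

theorem coeffsBounded_logCoeff (hpK : ‖(p : K)‖ < 1) :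
    CoeffsBounded (expRadius p K) (logCoeff K) := fun v hv => by
  rw [logCoeff, norm_div, norm_pow, norm_neg, norm_one, one_pow, one_div, ← norm_inv]
  exact norm_inv_natCast_mul_expRadius_pow_le hpK (by omega) hv
    (Nat.sub_one_mul_padicValNat_le p v)

end Coefficients

def partialSum {K R : Type*} [Semiring R] [SMul K R] (a : ℕ → K) (x : R) (N : ℕ) : R :=
  ∑ v ∈ Finset.Icc 1 N, a v • x ^ v

section TruncatedSeries

variable {K : Type*} [Field K]

noncomputable def truncSeries (a : ℕ → K) (N : ℕ) : K[X] :=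
  ∑ v ∈ Finset.Icc 1 N, C (a v) * X ^ v

theorem truncSeries_succ (a : ℕ → K) (N : ℕ) :
    truncSeries a (N + 1) = truncSeries a N + C (a (N + 1)) * X ^ (N + 1) :=
  Finset.sum_Icc_succ_top (by omega) _

theorem coeff_truncSeries (a : ℕ → K) (N d : ℕ) :
    (truncSeries a N).coeff d = if 1 ≤ d ∧ d ≤ N then a d else 0 := by
  simp [truncSeries, coeff_C_mul, coeff_X_pow]

theorem coeff_zero_truncSeries (a : ℕ → K) (N : ℕ) : (truncSeries a N).coeff 0 = 0 := by
  rw [coeff_truncSeries, if_neg (by omega)]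

theorem X_dvd_truncSeries (a : ℕ → K) (N : ℕ) : X ∣ truncSeries a N :=
  X_dvd_iff.2 (coeff_zero_truncSeries a N)

theorem coeff_zero_truncSeries_comp (a b : ℕ → K) (N M : ℕ) :
    ((truncSeries b M).comp (truncSeries a N)).coeff 0 = 0 := by
  rw [coeff_zero_eq_eval_zero, eval_comp, ← coeff_zero_eq_eval_zero, coeff_zero_truncSeries,
    ← coeff_zero_eq_eval_zero, coeff_zero_truncSeries]

theorem aeval_truncSeries {R : Type*} [Ring R] [Algebra K R] (a : ℕ → K) (x : R) (N : ℕ) :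
    aeval x (truncSeries a N) = partialSum a x N := by
  simp [truncSeries, partialSum, Algebra.smul_def]

variable [CharZero K]

theorem derivative_truncSeries_expCoeff (N : ℕ) :
    derivative (truncSeries (expCoeff K) N) =
      1 + truncSeries (expCoeff K) N - C (expCoeff K N) * X ^ N := by
  induction N with
  | zero => simp [truncSeries, expCoeff]
  | succ N ih =>
    have hfac : expCoeff K (N + 1) * ((N : K) + 1) = expCoeff K N := by
      simp only [expCoeff, Nat.factorial_succ, Nat.cast_mul, Nat.cast_succ]
      field_simp
    rw [truncSeries_succ, derivative_add, ih, derivative_C_mul_X_pow, Nat.cast_succ, hfac,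
      Nat.add_sub_cancel]
    ring

theorem one_add_X_mul_derivative_truncSeries_logCoeff (N : ℕ) :
    (1 + X) * derivative (truncSeries (logCoeff K) N) = 1 - (-X) ^ N := by
  induction N with
  | zero => simp [truncSeries]
  | succ N ih =>
    have hlog : logCoeff K (N + 1) * ((N : K) + 1) = (-1) ^ N := by
      simp only [logCoeff, Nat.add_sub_cancel, Nat.cast_succ]
      field_simp
    rw [truncSeries_succ, derivative_add, mul_add, ih, derivative_C_mul_X_pow, Nat.cast_succ,
      hlog, Nat.add_sub_cancel, neg_pow (X : K[X]), C_pow, C_neg, C_1]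
    ring

theorem X_pow_succ_dvd_of_dvd_derivative {u : K[X]} {N : ℕ} (h0 : u.coeff 0 = 0)
    (h : X ^ N ∣ derivative u) : X ^ (N + 1) ∣ u := by
  refine X_pow_dvd_iff.2 fun d hd => ?_
  rcases d with _ | d
  · exact h0
  · have := X_pow_dvd_iff.1 h d (by omega)
    rw [coeff_derivative] at this
    exact (mul_eq_zero.1 this).resolve_right (by exact_mod_cast d.succ_ne_zero)

theorem X_pow_succ_dvd_of_dvd_one_add_X_mul_derivative_sub {u : K[X]} (h0 : u.coeff 0 = 0) :
    ∀ {N : ℕ}, X ^ N ∣ (1 + X) * derivative u - u → X ^ (N + 1) ∣ u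
  | 0, _ => X_pow_dvd_iff.2 fun d hd => by rwa [Nat.lt_one_iff.1 hd]
  | N + 1, h => by
    have ih := X_pow_succ_dvd_of_dvd_one_add_X_mul_derivative_sub h0
      ((pow_dvd_pow X N.le_succ).trans h)
    refine X_pow_dvd_iff.2 fun d hd => ?_
    rcases Nat.lt_succ_iff_lt_or_eq.1 hd with hd | rfl
    · exact X_pow_dvd_iff.1 ih d hd
    · have huN : u.coeff N = 0 := X_pow_dvd_iff.1 ih N N.lt_succ_self
      have hXu : (X * derivative u).coeff N = 0 := by
        cases N with
        | zero => simp
        | succ m => simp [coeff_X_mul, coeff_derivative, huN]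
      have hN := X_pow_dvd_iff.1 h N N.lt_succ_self
      rw [coeff_sub, add_mul, one_mul, coeff_add, hXu, huN, coeff_derivative] at hN
      simpa [Nat.cast_add_one_ne_zero] using hN

theorem X_pow_succ_dvd_truncSeries_logCoeff_comp_sub_X (N : ℕ) :
    X ^ (N + 1) ∣ (truncSeries (logCoeff K) N).comp (truncSeries (expCoeff K) N) - X := by
  set E := truncSeries (expCoeff K) N
  set L := truncSeries (logCoeff K) N
  have hL : (1 + E) * (derivative L).comp E = 1 - (-E) ^ N := by
    simpa using congrArg (·.comp E) (one_add_X_mul_derivative_truncSeries_logCoeff (K := K) N)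
  have hderiv : derivative (L.comp E) - 1 =
      -(-E) ^ N - X ^ N * (C (expCoeff K N) * (derivative L).comp E) := by
    rw [derivative_comp, derivative_truncSeries_expCoeff]
    linear_combination hL
  refine X_pow_succ_dvd_of_dvd_derivative (by simpa using coeff_zero_truncSeries_comp _ _ N N) ?_
  rw [derivative_sub, derivative_X, hderiv]
  exact dvd_sub (dvd_neg.2 (pow_dvd_pow_of_dvd (dvd_neg.2 (X_dvd_truncSeries _ _)) N))
    (dvd_mul_right _ _)

theorem X_pow_succ_dvd_truncSeries_expCoeff_comp_sub_X (N : ℕ) :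
    X ^ (N + 1) ∣ (truncSeries (expCoeff K) N).comp (truncSeries (logCoeff K) N) - X := by
  set E := truncSeries (expCoeff K) N
  set L := truncSeries (logCoeff K) N
  -- Chain rule, with `(1 + X) L' ≡ 1` and `E' ≡ 1 + E` modulo `X ^ N`.
  have hderiv : (1 + X) * derivative (E.comp L - X) - (E.comp L - X) =
      -(-X) ^ N * (1 + E.comp L - C (expCoeff K N) * L ^ N) - C (expCoeff K N) * L ^ N := by
    rw [derivative_sub, derivative_X, derivative_comp, derivative_truncSeries_expCoeff]
    simp only [sub_comp, add_comp, one_comp, mul_comp, C_comp, pow_comp, X_comp]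
    linear_combination (1 + E.comp L - C (expCoeff K N) * L ^ N) *
      one_add_X_mul_derivative_truncSeries_logCoeff (K := K) N
  refine X_pow_succ_dvd_of_dvd_one_add_X_mul_derivative_sub
    (by simpa using coeff_zero_truncSeries_comp _ _ N N) ?_
  rw [hderiv]
  exact dvd_sub (dvd_mul_of_dvd_left (dvd_neg.2 (pow_dvd_pow_of_dvd (dvd_neg.2 dvd_rfl) N)) _)
    (dvd_mul_of_dvd_right (pow_dvd_pow_of_dvd (X_dvd_truncSeries _ _) N) _)

end TruncatedSeries

section GaussNorm

variable {K : Type*} [NormedField K]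

theorem Polynomial.gaussNorm_le_iff {f : K[X]} {c t : ℝ} (hc : 0 ≤ c) :
    f.gaussNorm (NormedField.toAbsoluteValue K) c ≤ t ↔ ∀ i, ‖f.coeff i‖ * c ^ i ≤ t := by
  refine ⟨fun h i => (le_gaussNorm _ f hc i).trans h, fun h => ?_⟩
  obtain ⟨i, hi⟩ := f.exists_eq_gaussNorm (NormedField.toAbsoluteValue K) c
  exact hi ▸ h i

theorem Polynomial.gaussNorm_mono {f : K[X]} {c d : ℝ} (hc : 0 ≤ c) (hcd : c ≤ d) :
    f.gaussNorm (NormedField.toAbsoluteValue K) c ≤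
      f.gaussNorm (NormedField.toAbsoluteValue K) d := by
  obtain ⟨i, hi⟩ := f.exists_eq_gaussNorm (NormedField.toAbsoluteValue K) c
  rw [hi]
  exact (mul_le_mul_of_nonneg_left (pow_le_pow_left₀ hc hcd i) (AbsoluteValue.nonneg _ _)).trans
    (le_gaussNorm (NormedField.toAbsoluteValue K) f (hc.trans hcd) i)

theorem Polynomial.gaussNorm_X (c : ℝ) :
    (X : K[X]).gaussNorm (NormedField.toAbsoluteValue K) c = c := by
  rw [← monomial_one_one_eq_X, gaussNorm_monomial]
  simp

theorem gaussNorm_truncSeries_le {q : ℝ} {a : ℕ → K} (hq : 0 < q) (ha : CoeffsBounded q a)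
    (N : ℕ) : (truncSeries a N).gaussNorm (NormedField.toAbsoluteValue K) q ≤ q := by
  refine (gaussNorm_le_iff hq.le).2 fun d => ?_
  rw [coeff_truncSeries]
  split_ifs with h
  · exact ha d h.1
  · simpa using hq.le

variable [IsUltrametricDist K]

theorem NormedField.isNonarchimedean_toAbsoluteValue :
    IsNonarchimedean (NormedField.toAbsoluteValue K) :=
  IsUltrametricDist.isNonarchimedean_norm

theorem Polynomial.gaussNorm_comp_le (f g : K[X]) {c : ℝ} (hc : 0 < c) :
    (f.comp g).gaussNorm (NormedField.toAbsoluteValue K) c ≤ f.gaussNorm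
      (NormedField.toAbsoluteValue K) (g.gaussNorm (NormedField.toAbsoluteValue K) c) := by
  have hna := NormedField.isNonarchimedean_toAbsoluteValue (K := K)
  have hg := gaussNorm_nonneg (NormedField.toAbsoluteValue K) g hc.le
  obtain ⟨i, -, hi⟩ := (isNonarchimedean_gaussNorm _ hna hc.le).finset_image_add
    (gaussNorm_zero _ _) (fun h => gaussNorm_nonneg _ h hc.le)
    (fun e => C (f.coeff e) * g ^ e) f.support
  rw [comp_eq_sum_left, Polynomial.sum_def]
  refine hi.trans ?_
  have habv := gaussNorm_isAbsoluteValue hna hc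
  rw [habv.abv_mul, habv.abv_pow, gaussNorm_C]
  exact le_gaussNorm _ f hg i

theorem gaussNorm_truncSeries_comp_sub_X_le {q : ℝ} {a b : ℕ → K} (hq : 0 < q)
    (ha : CoeffsBounded q a) (hb : CoeffsBounded q b) (N M : ℕ) :
    ((truncSeries b M).comp (truncSeries a N) - X).gaussNorm
      (NormedField.toAbsoluteValue K) q ≤ q := by
  have hna := NormedField.isNonarchimedean_toAbsoluteValue (K := K)
  rw [sub_eq_add_neg]
  refine (isNonarchimedean_gaussNorm _ hna hq.le _ _).trans (max_le ?_ ?_)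
  · exact (gaussNorm_comp_le _ _ hq).trans ((gaussNorm_mono (gaussNorm_nonneg _ _ hq.le)
      (gaussNorm_truncSeries_le hq ha N)).trans (gaussNorm_truncSeries_le hq hb M))
  · rw [(gaussNorm_isAbsoluteValue hna hq).abv_neg, gaussNorm_X]

theorem Polynomial.gaussNorm_multiset_prod_X_sub_C_le {r : ℝ} (hr : 0 < r) (s : Multiset K)
    (hs : ∀ μ ∈ s, ‖μ‖ ≤ r) :
    (s.map fun μ => X - C μ).prod.gaussNorm (NormedField.toAbsoluteValue K) r ≤
      r ^ Multiset.card s := by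
  have hna := NormedField.isNonarchimedean_toAbsoluteValue (K := K)
  induction s using Multiset.induction_on with
  | empty =>
    rw [Multiset.map_zero, Multiset.prod_zero, ← C_1, gaussNorm_C]
    simp
  | cons a s ih =>
    have hlin : (X - C a).gaussNorm (NormedField.toAbsoluteValue K) r ≤ r := by
      rw [sub_eq_add_neg, ← C_neg]
      refine (isNonarchimedean_gaussNorm _ hna hr.le _ _).trans (max_le ?_ ?_)
      · rw [gaussNorm_X]
      · rw [gaussNorm_C]
        exact (norm_neg a).trans_le (hs a (Multiset.mem_cons_self a s))
    rw [Multiset.map_cons, Multiset.prod_cons, Multiset.card_cons, gaussNorm_mul hna hr, pow_succ']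
    exact mul_le_mul hlin (ih fun μ hμ => hs μ (Multiset.mem_cons_of_mem hμ))
      (gaussNorm_nonneg _ _ hr.le) hr.le

theorem Polynomial.gaussNorm_le_pow_natDegree {P : K[X]} (hP : P.Monic) (hsplit : P.Splits)
    {r : ℝ} (hr : 0 < r) (hroots : ∀ μ ∈ P.roots, ‖μ‖ ≤ r) :
    P.gaussNorm (NormedField.toAbsoluteValue K) r ≤ r ^ P.natDegree := by
  have := gaussNorm_multiset_prod_X_sub_C_le hr _ hroots
  rwa [← hsplit.eq_prod_roots_of_monic hP, splits_iff_card_roots.1 hsplit] at this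

end GaussNorm

section PowBounded

variable {R : Type*} [NormedRing R]

/-- Unlike a bound on the spectrum, this is a closed condition, so it passes to limits. -/
def powBounded (C r : ℝ) : Set R := {x | ∀ v : ℕ, ‖x ^ v‖ ≤ C * r ^ v}

theorem isClosed_powBounded (C r : ℝ) : IsClosed (powBounded C r : Set R) := by
  simp only [powBounded, Set.ofPred_forall]
  exact isClosed_iInter fun v => isClosed_le (by fun_prop) continuous_const

theorem powBounded_mono {C C' r : ℝ} (hC : C ≤ C') (hr : 0 ≤ r) :
    (powBounded C r : Set R) ⊆ powBounded C' r :=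
  fun _ hx v => (hx v).trans (mul_le_mul_of_nonneg_right hC (pow_nonneg hr v))

theorem nonneg_of_mem_powBounded {C r : ℝ} {x : R} (hx : x ∈ powBounded C r) : 0 ≤ C := by
  simpa using (norm_nonneg _).trans (hx 0)

theorem norm_pow_le_max_div_pow_mul_pow (h1 : ‖(1 : R)‖ ≤ 1) {r : ℝ} (hr : 0 < r) {x : R}
    {D : ℝ} (hD : ‖x‖ ≤ D) {v m : ℕ} (hvm : v ≤ m) : ‖x ^ v‖ ≤ (max D r / r) ^ m * r ^ v := by
  have hM : 1 ≤ max D r / r := (one_le_div hr).2 (le_max_right _ _)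
  have hxv : ‖x ^ v‖ ≤ max D r ^ v := by
    rcases Nat.eq_zero_or_pos v with rfl | hv
    · simpa using h1
    · exact (norm_pow_le' x hv).trans
        (pow_le_pow_left₀ (norm_nonneg _) (hD.trans (le_max_left _ _)) v)
  calc ‖x ^ v‖ ≤ (max D r / r) ^ v * r ^ v := by rwa [← mul_pow, div_mul_cancel₀ _ hr.ne']
    _ ≤ (max D r / r) ^ m * r ^ v := by gcongr

variable {K : Type*} [NormedField K] [NormedAlgebra K R] {q r C : ℝ}

theorem norm_smul_pow_le {c : K} {x : R} {d : ℕ} (hq : 0 < q) (hr : 0 ≤ r)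
    (hx : x ∈ powBounded C r) (hc : ‖c‖ * q ^ d ≤ q) : ‖c • x ^ d‖ ≤ C * q * (r / q) ^ d :=
  calc ‖c • x ^ d‖ ≤ ‖c‖ * (C * r ^ d) :=
        (norm_smul_le _ _).trans (mul_le_mul_of_nonneg_left (hx d) (norm_nonneg _))
    _ = C * (‖c‖ * q ^ d) * (r / q) ^ d := by rw [div_pow]; field_simp
    _ ≤ C * q * (r / q) ^ d := by
        gcongr
        exact nonneg_of_mem_powBounded hx

theorem spectrum_subset_closedBall_of_mem_powBounded [CompleteSpace R] {x : R} (hr : 0 ≤ r)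
    (hx : x ∈ powBounded C r) : spectrum K x ⊆ Metric.closedBall 0 r := fun μ hμ => by
  rw [mem_closedBall_zero_iff]
  refine le_of_forall_pow_le_mul_pow (C := C * ‖(1 : R)‖) hr fun v => ?_
  calc ‖μ‖ ^ v = ‖μ ^ v‖ := (norm_pow _ _).symm
    _ ≤ ‖x ^ v‖ * ‖(1 : R)‖ := spectrum.norm_le_norm_mul_of_mem (spectrum.pow_mem_pow x v hμ)
    _ ≤ C * r ^ v * ‖(1 : R)‖ := by gcongr; exact hx v
    _ = C * ‖(1 : R)‖ * r ^ v := by ring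

noncomputable def seriesSum (a : ℕ → K) (x : R) : R := ∑' v, a (v + 1) • x ^ (v + 1)

theorem partialSum_eq_sum_range (a : ℕ → K) (x : R) (N : ℕ) :
    partialSum a x N = ∑ v ∈ Finset.range N, a (v + 1) • x ^ (v + 1) := by
  induction N with
  | zero => simp [partialSum]
  | succ N ih => rw [Finset.sum_range_succ, ← ih, partialSum, partialSum,
      Finset.sum_Icc_succ_top (by omega)]

variable [CompleteSpace R] {a : ℕ → K}

theorem tendstoUniformlyOn_partialSum (hq : 0 < q) (hr : 0 ≤ r) (hrq : r < q)
    (ha : CoeffsBounded q a) (C : ℝ) :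
    TendstoUniformlyOn (fun N x => partialSum a x N) (seriesSum a) atTop
      (powBounded C r : Set R) := by
  simp only [partialSum_eq_sum_range]
  refine tendstoUniformlyOn_tsum_nat ((summable_geometric_of_lt_one (div_nonneg hr hq.le)
    ((div_lt_one hq).2 hrq)).mul_left (C * q * (r / q))) fun v x hx => ?_
  rw [mul_assoc, ← pow_succ']
  exact norm_smul_pow_le hq hr hx (ha _ v.succ_pos)

theorem continuousOn_seriesSum (hq : 0 < q) (hr : 0 ≤ r) (hrq : r < q) (ha : CoeffsBounded q a)
    (C : ℝ) : ContinuousOn (seriesSum a) (powBounded C r : Set R) :=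
  (tendstoUniformlyOn_partialSum hq hr hrq ha C).continuousOn
    (Frequently.of_forall fun N => by unfold partialSum; fun_prop)

theorem tendsto_partialSum (hq : 0 < q) (hr : 0 ≤ r) (hrq : r < q) (ha : CoeffsBounded q a)
    {x : R} (hx : x ∈ powBounded C r) : Tendsto (partialSum a x) atTop (𝓝 (seriesSum a x)) :=
  (tendstoUniformlyOn_partialSum hq hr hrq ha C).tendsto_at hx

end PowBounded

section Ultrametric

variable {K R : Type*} [NormedField K] [NormedRing R] [NormedAlgebra K R] [IsUltrametricDist R]
  {q r C : ℝ}

theorem norm_aeval_le_of_X_pow_dvd {g : K[X]} {x : R} {m : ℕ} (hq : 0 < q) (hr : 0 ≤ r)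
    (hrq : r ≤ q) (hx : x ∈ powBounded C r)
    (hg : g.gaussNorm (NormedField.toAbsoluteValue K) q ≤ q) (hdvd : X ^ m ∣ g) :
    ‖aeval x g‖ ≤ C * q * (r / q) ^ m := by
  have hC := nonneg_of_mem_powBounded hx
  have hρ : 0 ≤ r / q := div_nonneg hr hq.le
  rw [aeval_eq_sum_range]
  refine IsUltrametricDist.norm_sum_le_of_forall_le_of_nonneg (by positivity) fun d _ => ?_
  rcases lt_or_ge d m with hd | hd
  · rw [X_pow_dvd_iff.1 hdvd d hd, zero_smul, norm_zero]
    positivity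
  · exact (norm_smul_pow_le hq hr hx ((gaussNorm_le_iff hq.le).1 hg d)).trans
      (mul_le_mul_of_nonneg_left (pow_le_pow_of_le_one hρ ((div_le_one hq).2 hrq) hd)
        (by positivity))

theorem norm_partialSum_le {a : ℕ → K} {x : R} (hq : 0 < q) (hr : 0 ≤ r) (hrq : r ≤ q)
    (ha : CoeffsBounded q a) (hx : x ∈ powBounded C r) (N : ℕ) : ‖partialSum a x N‖ ≤ C * q := by
  have hC := nonneg_of_mem_powBounded hx
  refine IsUltrametricDist.norm_sum_le_of_forall_le_of_nonneg (by positivity) fun v hv => ?_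
  refine (norm_smul_pow_le hq hr hx (ha v (Finset.mem_Icc.1 hv).1)).trans ?_
  exact mul_le_of_le_one_right (by positivity)
    (pow_le_one₀ (div_nonneg hr hq.le) ((div_le_one hq).2 hrq))

theorem mem_powBounded_of_aeval_eq_zero {P : K[X]} (hP : P.Monic) {x : R} (hPx : aeval x P = 0)
    (hr : 0 < r) (hC : 0 ≤ C)
    (hPr : P.gaussNorm (NormedField.toAbsoluteValue K) r ≤ r ^ P.natDegree)
    (hlow : ∀ v < P.natDegree, ‖x ^ v‖ ≤ C * r ^ v) : x ∈ powBounded C r := by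
  set n := P.natDegree
  have hxn : x ^ n = -∑ i ∈ Finset.range n, P.coeff i • x ^ i := by
    rw [hP.as_sum, map_add, map_sum] at hPx
    simpa [Algebra.smul_def, eq_neg_iff_add_eq_zero] using hPx
  intro v
  induction v using Nat.strong_induction_on with
  | _ v ih =>
  rcases lt_or_ge v n with hv | hv
  · exact hlow v hv
  have hsplit : x ^ v = -∑ i ∈ Finset.range n, P.coeff i • x ^ (v - n + i) := by
    rw [← Nat.sub_add_cancel hv, pow_add, hxn, mul_neg, Finset.mul_sum, Nat.sub_add_cancel hv]
    simp_rw [mul_smul_comm, ← pow_add]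
  rw [hsplit, norm_neg]
  refine IsUltrametricDist.norm_sum_le_of_forall_le_of_nonneg (by positivity) fun i hi => ?_
  have hi : i < n := Finset.mem_range.1 hi
  calc ‖P.coeff i • x ^ (v - n + i)‖ ≤ ‖P.coeff i‖ * (C * r ^ (v - n + i)) :=
        (norm_smul_le _ _).trans (mul_le_mul_of_nonneg_left (ih _ (by omega)) (norm_nonneg _))
    _ = C * (‖P.coeff i‖ * r ^ i) * r ^ (v - n) := by ring
    _ ≤ C * r ^ n * r ^ (v - n) := by
        gcongr
        exact (le_gaussNorm _ P hr.le i).trans hPr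
    _ = C * r ^ v := by rw [mul_assoc, ← pow_add, Nat.add_sub_cancel' hv]

end Ultrametric

section Spectrum

variable {K R : Type*} [NormedField K] [IsUltrametricDist K] [NormedRing R] [NormedAlgebra K R]
  {q r C : ℝ}

theorem Polynomial.norm_eval_le_of_gaussNorm_le {g : K[X]} (hq : 0 < q) (hrq : r ≤ q)
    (hg0 : g.coeff 0 = 0) (hg : g.gaussNorm (NormedField.toAbsoluteValue K) q ≤ q) {μ : K}
    (hμ : ‖μ‖ ≤ r) : ‖g.eval μ‖ ≤ r := by
  have hr := (norm_nonneg μ).trans hμ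
  have hμ' : μ ∈ (powBounded 1 r : Set K) := fun v => by
    rw [norm_pow, one_mul]
    exact pow_le_pow_left₀ (norm_nonneg _) hμ v
  have := norm_aeval_le_of_X_pow_dvd hq hr hrq hμ' hg (pow_one (X : K[X]) ▸ X_dvd_iff.2 hg0)
  rwa [coe_aeval_eq_eval, one_mul, pow_one, mul_div_cancel₀ _ hq.ne'] at this

theorem spectrum_aeval_subset_closedBall [IsAlgClosed K] {g : K[X]} {x : R} (hq : 0 < q)
    (hr : 0 ≤ r) (hrq : r ≤ q) (hg0 : g.coeff 0 = 0)
    (hg : g.gaussNorm (NormedField.toAbsoluteValue K) q ≤ q)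
    (hx : spectrum K x ⊆ Metric.closedBall 0 r) :
    spectrum K (aeval x g) ⊆ Metric.closedBall 0 r := by
  rcases subsingleton_or_nontrivial R with hR | hR
  · simp [spectrum.of_subsingleton]
  by_cases hdeg : 0 < g.degree
  · rw [spectrum.map_polynomial_aeval_of_degree_pos x g hdeg]
    rintro _ ⟨μ, hμ, rfl⟩
    exact mem_closedBall_zero_iff.2
      (g.norm_eval_le_of_gaussNorm_le hq hrq hg0 hg (mem_closedBall_zero_iff.1 (hx hμ)))
  · rw [eq_C_of_degree_le_zero (not_lt.1 hdeg), hg0, map_zero, map_zero, spectrum.zero_eq]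
    simpa using hr

end Spectrum

section Composition

variable {K R : Type*} [NormedField K] [IsUltrametricDist K] [NormedRing R] [NormedAlgebra K R]
  [IsUltrametricDist R] [CompleteSpace R] {q r C : ℝ}

theorem seriesSum_seriesSum_eq {a b : ℕ → K} (hq : 0 < q) (hr : 0 ≤ r)
    (hrq : r < q) (ha : CoeffsBounded q a) (hb : CoeffsBounded q b)
    (hcomp : ∀ N, X ^ (N + 1) ∣ (truncSeries b N).comp (truncSeries a N) - X) {x : R}
    (hx : x ∈ powBounded C r) (hS : ∀ N, partialSum a x N ∈ powBounded C r) :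
    seriesSum b (seriesSum a x) = x := by
  have hSx := tendsto_partialSum hq hr hrq ha hx
  have hy : seriesSum a x ∈ powBounded C r :=
    (isClosed_powBounded C r).mem_of_tendsto hSx (Eventually.of_forall hS)
  have hlim : Tendsto (fun N => partialSum b (partialSum a x N) N) atTop
      (𝓝 (seriesSum b (seriesSum a x))) :=
    (tendstoUniformlyOn_partialSum hq hr hrq hb C).tendsto_comp
      (continuousOn_seriesSum hq hr hrq hb C _ hy)
      (tendsto_nhdsWithin_iff.2 ⟨hSx, Eventually.of_forall hS⟩)
  have htail : Tendsto (fun N : ℕ => C * q * (r / q) ^ (N + 1)) atTop (𝓝 0) := by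
    simpa using ((tendsto_pow_atTop_nhds_zero_of_lt_one (div_nonneg hr hq.le)
      ((div_lt_one hq).2 hrq)).comp (tendsto_add_atTop_nat 1)).const_mul (C * q)
  refine tendsto_nhds_unique hlim (tendsto_iff_norm_sub_tendsto_zero.2 ?_)
  refine squeeze_zero (fun _ => norm_nonneg _) (fun N => ?_) htail
  have hN : partialSum b (partialSum a x N) N - x =
      aeval x ((truncSeries b N).comp (truncSeries a N) - X) := by
    rw [map_sub, aeval_X, aeval_comp, aeval_truncSeries, aeval_truncSeries]
  rw [hN]
  exact norm_aeval_le_of_X_pow_dvd hq hr hrq.le hx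
    (gaussNorm_truncSeries_comp_sub_X_le hq ha hb N N) (hcomp N)

end Composition

namespace Matrix

section EntrywiseNorm

variable {K : Type*} [NormedField K]

attribute [local instance] Matrix.normedAddCommGroup Matrix.normedSpace

theorem norm_one_le {n : Type*} [Fintype n] [DecidableEq n] : ‖(1 : Matrix n n K)‖ ≤ 1 :=
  (norm_le_iff zero_le_one).2 fun i j => by
    rw [one_apply]
    split_ifs <;> simp

theorem norm_mul_le_of_isUltrametricDist [IsUltrametricDist K] {l m n : Type*} [Fintype l]
    [Fintype m] [Fintype n] (A : Matrix l m K) (B : Matrix m n K) : ‖A * B‖ ≤ ‖A‖ * ‖B‖ := by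
  refine (norm_le_iff (by positivity)).2 fun i j => ?_
  rw [mul_apply]
  refine IsUltrametricDist.norm_sum_le_of_forall_le_of_nonneg (by positivity) fun k _ => ?_
  rw [norm_mul]
  exact mul_le_mul A.norm_entry_le_entrywise_sup_norm B.norm_entry_le_entrywise_sup_norm
    (norm_nonneg _) (norm_nonneg _)

end EntrywiseNorm

section UltrametricNormedAlgebra

/- The paper uses the L∞ operator norm; the entrywise sup norm defines the same topology and,
unlike the former, is ultrametric. -/

variable {K : Type*} [NormedField K] [IsUltrametricDist K] {n : Type*} [Fintype n] [DecidableEq n]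

@[reducible]
def ultrametricNormedRing : NormedRing (Matrix n n K) :=
  { Matrix.normedAddCommGroup, Matrix.instRing with
    norm_mul_le := norm_mul_le_of_isUltrametricDist }

attribute [local instance] ultrametricNormedRing

@[reducible]
def ultrametricNormedAlgebra : NormedAlgebra K (Matrix n n K) :=
  { Matrix.normedSpace, Matrix.instAlgebra with }

theorem isUltrametricDist : IsUltrametricDist (Matrix n n K) :=
  inferInstanceAs (IsUltrametricDist (n → n → K))

theorem completeSpace [CompleteSpace K] :
    @CompleteSpace (Matrix n n K) PseudoMetricSpace.toUniformSpace :=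
  inferInstanceAs (CompleteSpace (n → n → K))

attribute [local instance] ultrametricNormedAlgebra isUltrametricDist completeSpace

variable [IsAlgClosed K] {q r : ℝ}

theorem mem_powBounded_of_spectrum_subset (hr : 0 < r) {A : Matrix n n K}
    (hA : spectrum K A ⊆ Metric.closedBall 0 r) {D : ℝ} (hD : ‖A‖ ≤ D) : A ∈ powBounded ((max D r / r) ^ Fintype.card n) r := by
  have hdeg := A.charpoly_natDegree_eq_dim
  have hC : 0 ≤ (max D r / r) ^ Fintype.card n :=
    pow_nonneg (div_nonneg (hr.le.trans (le_max_right _ _)) hr.le) _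
  refine mem_powBounded_of_aeval_eq_zero A.charpoly_monic A.aeval_self_charpoly hr hC ?_
    fun v hv => norm_pow_le_max_div_pow_mul_pow norm_one_le hr hD (hdeg ▸ hv).le
  refine hdeg ▸ gaussNorm_le_pow_natDegree A.charpoly_monic (IsAlgClosed.splits _) hr
    fun μ hμ => ?_
  exact mem_closedBall_zero_iff.1 (hA (mem_spectrum_iff_isRoot_charpoly.2 (mem_roots'.1 hμ).2))

variable {a b : ℕ → K}

theorem exists_powBounded_partialSum (hq : 0 < q) (ha : CoeffsBounded q a) {X : Matrix n n K}
    (hX : spectrum K X ⊆ Metric.ball 0 q) :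
    ∃ C r, 0 ≤ r ∧ r < q ∧ X ∈ powBounded C r ∧ ∀ N, partialSum a X N ∈ powBounded C r := by
  obtain ⟨r, ⟨hr, hrq⟩, hXr⟩ := X.finite_spectrum.exists_pos_lt_subset_closedBall hq hX
  set C₀ := (max ‖X‖ r / r) ^ Fintype.card n
  have hX₀ : X ∈ powBounded C₀ r := mem_powBounded_of_spectrum_subset hr hXr le_rfl
  refine ⟨max C₀ ((max (C₀ * q) r / r) ^ Fintype.card n), r, hr.le, hrq,
    powBounded_mono (le_max_left _ _) hr.le hX₀,
    fun N => powBounded_mono (le_max_right _ _) hr.le ?_⟩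
  have hspec : spectrum K (partialSum a X N) ⊆ Metric.closedBall 0 r := by
    rw [← aeval_truncSeries]
    exact spectrum_aeval_subset_closedBall hq hr.le hrq.le (coeff_zero_truncSeries a N)
      (gaussNorm_truncSeries_le hq ha N) hXr
  exact mem_powBounded_of_spectrum_subset hr hspec (norm_partialSum_le hq hr.le hrq.le ha hX₀ N)

variable [CompleteSpace K]

theorem exists_tendsto_partialSum (hq : 0 < q) (ha : CoeffsBounded q a) {X : Matrix n n K}
    (hX : spectrum K X ⊆ Metric.ball 0 q) :
    ∃ Y, spectrum K Y ⊆ Metric.ball 0 q ∧ Tendsto (partialSum a X) atTop (𝓝 Y) := by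
  obtain ⟨C, r, hr, hrq, hXC, hS⟩ := exists_powBounded_partialSum hq ha hX
  have hlim := tendsto_partialSum hq hr hrq ha hXC
  have hY := (isClosed_powBounded C r).mem_of_tendsto hlim (Eventually.of_forall hS)
  exact ⟨seriesSum a X, (spectrum_subset_closedBall_of_mem_powBounded hr hY).trans
    (Metric.closedBall_subset_ball hrq), hlim⟩

theorem eq_of_tendsto_partialSum_partialSum (hq : 0 < q) (ha : CoeffsBounded q a)
    (hb : CoeffsBounded q b)
    (hcomp : ∀ N, X ^ (N + 1) ∣ (truncSeries b N).comp (truncSeries a N) - X)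
    {A : Matrix n n K} (hA : spectrum K A ⊆ Metric.ball 0 q) {Y Z : Matrix n n K}
    (hY : Tendsto (partialSum a A) atTop (𝓝 Y)) (hZ : Tendsto (partialSum b Y) atTop (𝓝 Z)) :
    Z = A := by
  obtain ⟨C, r, hr, hrq, hAC, hS⟩ := exists_powBounded_partialSum hq ha hA
  have hYC := (isClosed_powBounded C r).mem_of_tendsto hY (Eventually.of_forall hS)
  rw [tendsto_nhds_unique hZ (tendsto_partialSum hq hr hrq hb hYC),
    tendsto_nhds_unique hY (tendsto_partialSum hq hr hrq ha hAC)]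
  exact seriesSum_seriesSum_eq hq hr hrq ha hb hcomp hAC hS

end UltrametricNormedAlgebra

end Matrix

theorem mem_spectralBall_iff {p : ℕ} {K : Type*} [NontriviallyNormedField K] {n : ℕ}
    {X : Matrix (Fin n) (Fin n) K} :
    X ∈ spectralBall p K n ↔ spectrum K X ⊆ Metric.ball 0 (expRadius p K) :=
  ⟨fun h _ hμ => mem_ball_zero_iff.2 (h _ (Matrix.mem_spectrum_iff_isRoot_charpoly.1 hμ)),
    fun h _ hμ => mem_ball_zero_iff.1 (h (Matrix.mem_spectrum_iff_isRoot_charpoly.2 hμ))⟩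

theorem matrix_exp_log_spectralBall_general (p : ℕ) [Fact p.Prime] (K : Type*)
    [NontriviallyNormedField K] [CompleteSpace K] [IsAlgClosed K] [CharZero K]
    [IsUltrametricDist K] (hpK : ‖(p : K)‖ < 1) (n : ℕ) :
    (∀ X ∈ spectralBall p K n, ∃ eX ∈ spectralBall p K n,
      Tendsto (matExpSums K X) atTop (nhds eX)) ∧
    (∀ X ∈ spectralBall p K n, ∃ lX ∈ spectralBall p K n,
      Tendsto (matLogSums K X) atTop (nhds lX)) ∧
    (∀ X ∈ spectralBall p K n, ∀ Y Z, Tendsto (matExpSums K X) atTop (nhds Y) →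
      Tendsto (matLogSums K Y) atTop (nhds Z) → Z = X) ∧
    (∀ X ∈ spectralBall p K n, ∀ Y Z, Tendsto (matLogSums K X) atTop (nhds Y) →
      Tendsto (matExpSums K Y) atTop (nhds Z) → Z = X) := by
  have hq : 0 < expRadius p K := expRadius_pos
  have hexp := coeffsBounded_expCoeff (K := K) hpK
  have hlog := coeffsBounded_logCoeff (K := K) hpK
  simp only [mem_spectralBall_iff]
  exact ⟨fun X hX => Matrix.exists_tendsto_partialSum hq hexp hX,
    fun X hX => Matrix.exists_tendsto_partialSum hq hlog hX,
    fun X hX _ _ => Matrix.eq_of_tendsto_partialSum_partialSum hq hexp hlog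
      X_pow_succ_dvd_truncSeries_logCoeff_comp_sub_X hX,
    fun X hX _ _ => Matrix.eq_of_tendsto_partialSum_partialSum hq hlog hexp
      X_pow_succ_dvd_truncSeries_expCoeff_comp_sub_X hX⟩

/-- Proposition B.1 of the paper: over a complete algebraically closed ultrametric field of
characteristic `0` and residue characteristic `p`, the exponential and logarithmic series
converge on `B_n` and define mutually inverse bijections of `B_n` onto itself. -/
theorem matrix_exp_log_spectralBall (p : ℕ) [Fact p.Prime] (K : Type*)
    [NontriviallyNormedField K] [CompleteSpace K] [IsAlgClosed K] [CharZero K]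
    [IsUltrametricDist K] (hpK : ‖(p : K)‖ < 1) (n : ℕ) (hn : 1 ≤ n) :
    (∀ X ∈ spectralBall p K n, ∃ eX ∈ spectralBall p K n,
      Tendsto (matExpSums K X) atTop (nhds eX)) ∧
    (∀ X ∈ spectralBall p K n, ∃ lX ∈ spectralBall p K n,
      Tendsto (matLogSums K X) atTop (nhds lX)) ∧
    (∀ X ∈ spectralBall p K n, ∀ Y Z, Tendsto (matExpSums K X) atTop (nhds Y) →
      Tendsto (matLogSums K Y) atTop (nhds Z) → Z = X) ∧
    (∀ X ∈ spectralBall p K n, ∀ Y Z, Tendsto (matLogSums K X) atTop (nhds Y) →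
      Tendsto (matExpSums K Y) atTop (nhds Z) → Z = X) :=
  matrix_exp_log_spectralBall_general p K hpK n
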